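/- If an element g of a free amalgamated product O *_{O∩L} L has n-th roots for every positive integer n (i.e., for each n there exists h with h^n = g), then g is conjugate to an element of O or to an element of L. -/

import Mathlib

/-- An alternating (reduced) word: each letter lies in exactly one of the factors
`O`, `L` (outside the amalgamated subgroup `O ⊓ L`), and consecutive letters lie in
different factors. -/
def IsAlternatingWord {G : Type*} [Group G] (O L : Subgroup G) (w : List G) : Prop :=
  (∀ g ∈ w, (g ∈ O ∧ g ∉ L) ∨ (g ∈ L ∧ g ∉ O)) ∧
  List.Chain' (fun a b => ¬(a ∈ O ∧ b ∈ O) ∧ ¬(a ∈ L ∧ b ∈ L)) w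

/-- `G` is the free amalgamated product `O *_{O ⊓ L} L` of its subgroups `O` and `L`:
`O` and `L` generate `G`, and no nonempty alternating word has product `1`. -/
def IsAmalgamatedProduct {G : Type*} [Group G] (O L : Subgroup G) : Prop :=
  O ⊔ L = ⊤ ∧ ∀ w : List G, IsAlternatingWord O L w → w ≠ [] → w.prod ≠ 1

/-- The (syllable) length of `g`: the least number of factors from `O ∪ L` needed to
write `g` as a product. For the amalgamated product this equals the length of a
reduced expression for `g`. -/
noncomputable def amalLength {G : Type*} [Group G] (O L : Subgroup G) (g : G) : ℕ :=
  sInf {n | ∃ w : List G, w.length = n ∧ (∀ x ∈ w, x ∈ O ∨ x ∈ L) ∧ w.prod = g}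

namespace AmalAux

variable {G : Type*} [Group G] (O L : Subgroup G)

/-- the non-adjacency relation -/
def Rel (a b : G) : Prop := ¬(a ∈ O ∧ b ∈ O) ∧ ¬(a ∈ L ∧ b ∈ L)

variable {O L}

lemma alt_def {w : List G} :
    IsAlternatingWord O L w ↔
      (∀ g ∈ w, (g ∈ O ∧ g ∉ L) ∨ (g ∈ L ∧ g ∉ O)) ∧ List.Chain' (Rel O L) w := Iff.rfl

lemma rel_symm {a b : G} (h : Rel O L a b) : Rel O L b a :=
  ⟨fun ⟨x, y⟩ => h.1 ⟨y, x⟩, fun ⟨x, y⟩ => h.2 ⟨y, x⟩⟩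

lemma rel_inv_inv {a b : G} (h : Rel O L a b) : Rel O L a⁻¹ b⁻¹ := by
  simpa [Rel, inv_mem_iff] using h

/-- replace a letter by one with the same memberships: Rel transfers -/
lemma rel_congr_left {a a' b : G} (hO : a' ∈ O ↔ a ∈ O) (hL : a' ∈ L ↔ a ∈ L)
    (h : Rel O L a b) : Rel O L a' b := by
  refine ⟨fun ⟨x, y⟩ => h.1 ⟨hO.mp x, y⟩, fun ⟨x, y⟩ => h.2 ⟨hL.mp x, y⟩⟩

lemma rel_congr_right {a b b' : G} (hO : b' ∈ O ↔ b ∈ O) (hL : b' ∈ L ↔ b ∈ L)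
    (h : Rel O L a b) : Rel O L a b' :=
  rel_symm (rel_congr_left hO hL (rel_symm h))

/-- multiplying by an element of O ∩ L does not change memberships -/
lemma mem_mul_iff_left {z a : G} (hzO : z ∈ O) (hzL : z ∈ L) :
    ((z * a ∈ O ↔ a ∈ O) ∧ (z * a ∈ L ↔ a ∈ L)) := by
  constructor
  · constructor
    · intro h; simpa using mul_mem (inv_mem hzO) h
    · exact fun h => mul_mem hzO h
  · constructor
    · intro h; simpa using mul_mem (inv_mem hzL) h
    · exact fun h => mul_mem hzL h

lemma mem_mul_iff_right {z a : G} (hzO : z ∈ O) (hzL : z ∈ L) :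
    ((a * z ∈ O ↔ a ∈ O) ∧ (a * z ∈ L ↔ a ∈ L)) := by
  constructor
  · constructor
    · intro h; simpa using mul_mem h (inv_mem hzO)
    · exact fun h => mul_mem h hzO
  · constructor
    · intro h; simpa using mul_mem h (inv_mem hzL)
    · exact fun h => mul_mem h hzL

/-- Alternating word with the head replaced by an element with equal memberships -/
lemma alt_modify_head {q q' : G} {v : List G} (h : IsAlternatingWord O L (q :: v))
    (hO : q' ∈ O ↔ q ∈ O) (hL : q' ∈ L ↔ q ∈ L) : IsAlternatingWord O L (q' :: v) := by
  obtain ⟨hm, hc⟩ := h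
  constructor
  · intro g hg
    rcases List.mem_cons.mp hg with rfl | hg
    · rcases hm q (by simp) with ⟨h1, h2⟩ | ⟨h1, h2⟩
      · exact Or.inl ⟨hO.mpr h1, fun hx => h2 (hL.mp hx)⟩
      · exact Or.inr ⟨hL.mpr h1, fun hx => h2 (hO.mp hx)⟩
    · exact hm g (List.mem_cons_of_mem _ hg)
  · cases v with
    | nil => simp [List.Chain']
    | cons b t =>
      rw [List.Chain', List.isChain_cons_cons] at hc ⊢
      exact ⟨rel_congr_left hO hL hc.1, hc.2⟩

lemma alt_modify_last {p p' : G} {v : List G} (h : IsAlternatingWord O L (v ++ [p]))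
    (hO : p' ∈ O ↔ p ∈ O) (hL : p' ∈ L ↔ p ∈ L) : IsAlternatingWord O L (v ++ [p']) := by
  obtain ⟨hm, hc⟩ := h
  rw [List.Chain', List.isChain_append] at hc
  constructor
  · intro g hg
    rcases List.mem_append.mp hg with hg | hg
    · exact hm g (List.mem_append.mpr (Or.inl hg))
    · simp only [List.mem_singleton] at hg; subst hg
      rcases hm p (by simp) with ⟨h1, h2⟩ | ⟨h1, h2⟩
      · exact Or.inl ⟨hO.mpr h1, fun hx => h2 (hL.mp hx)⟩
      · exact Or.inr ⟨hL.mpr h1, fun hx => h2 (hO.mp hx)⟩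
  · rw [List.Chain', List.isChain_append]
    refine ⟨hc.1, by simp, ?_⟩
    intro x hx y hy
    simp only [List.head?_cons, Option.mem_def, Option.some.injEq] at hy
    subst hy
    exact rel_congr_right hO hL (hc.2.2 x hx p (by simp))


/-- every element is a product of letters from O ∪ L -/
lemma exists_word (hG : IsAmalgamatedProduct O L) (g : G) :
    ∃ w : List G, (∀ x ∈ w, x ∈ O ∨ x ∈ L) ∧ w.prod = g := by
  have hg : g ∈ O ⊔ L := hG.1 ▸ Subgroup.mem_top g
  rw [Subgroup.sup_eq_closure] at hg
  refine Subgroup.closure_induction ?_ ?_ ?_ ?_ hg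
  · intro x hx
    simp only [Set.mem_union, SetLike.mem_coe] at hx
    rcases hx with h | h
    · exact ⟨[x], by simp [h], by simp⟩
    · exact ⟨[x], by simp [h], by simp⟩
  · exact ⟨[], by simp, by simp⟩
  · rintro x y - - ⟨w1, h1, rfl⟩ ⟨w2, h2, rfl⟩
    refine ⟨w1 ++ w2, ?_, by simp⟩
    intro z hz
    rcases List.mem_append.mp hz with h | h
    · exact h1 z h
    · exact h2 z h
  · rintro x - ⟨w, h1, rfl⟩
    refine ⟨(w.map (·⁻¹)).reverse, ?_, ?_⟩
    · intro z hz
      simp only [List.mem_reverse, List.mem_map] at hz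
      obtain ⟨a, ha, rfl⟩ := hz
      rcases h1 a ha with h | h
      · exact Or.inl (inv_mem h)
      · exact Or.inr (inv_mem h)
    · rw [List.prod_reverse_noncomm]
      simp

lemma lenSet_nonempty (hG : IsAmalgamatedProduct O L) (g : G) :
    {n | ∃ w : List G, w.length = n ∧ (∀ x ∈ w, x ∈ O ∨ x ∈ L) ∧ w.prod = g}.Nonempty := by
  obtain ⟨w, h1, h2⟩ := exists_word hG g
  exact ⟨w.length, w, rfl, h1, h2⟩

lemma amalLength_spec (hG : IsAmalgamatedProduct O L) (g : G) :
    ∃ w : List G, w.length = amalLength O L g ∧ (∀ x ∈ w, x ∈ O ∨ x ∈ L) ∧ w.prod = g :=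
  Nat.sInf_mem (lenSet_nonempty hG g)

lemma amalLength_le {g : G} {w : List G} (hw : ∀ x ∈ w, x ∈ O ∨ x ∈ L) (hp : w.prod = g) :
    amalLength O L g ≤ w.length :=
  Nat.sInf_le ⟨w, rfl, hw, hp⟩

lemma alt_letters {w : List G} (h : IsAlternatingWord O L w) : ∀ x ∈ w, x ∈ O ∨ x ∈ L := by
  intro x hx
  rcases h.1 x hx with ⟨h1, _⟩ | ⟨h1, _⟩
  · exact Or.inl h1
  · exact Or.inr h1

/-- Lemma Z : an alternating word whose product lies in O ∩ L is empty. -/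
lemma alt_eq_nil_of_prod_mem (hG : IsAmalgamatedProduct O L) {w : List G}
    (hw : IsAlternatingWord O L w) (hO : w.prod ∈ O) (hL : w.prod ∈ L) : w = [] := by
  rcases List.eq_nil_or_concat w with rfl | ⟨ws, p, rfl⟩
  · rfl
  exfalso
  rw [List.concat_eq_append] at hw hO hL
  set z := (ws ++ [p]).prod with hz
  have h1 : (ws ++ [p * z⁻¹]).prod = 1 := by
    have : (ws ++ [p]).prod = ws.prod * p := by simp
    simp only [List.prod_append, List.prod_cons, List.prod_nil, mul_one]
    rw [hz]; group
    simp [this, mul_assoc]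
  have halt : IsAlternatingWord O L (ws ++ [p * z⁻¹]) := by
    refine alt_modify_last hw ?_ ?_
    · exact (mem_mul_iff_right (inv_mem hO) (inv_mem hL)).1
    · exact (mem_mul_iff_right (inv_mem hO) (inv_mem hL)).2
  exact hG.2 _ halt (by simp) h1


lemma alt_swap {w : List G} (h : IsAlternatingWord O L w) : IsAlternatingWord L O w := by
  obtain ⟨hm, hc⟩ := h
  constructor
  · intro g hg; exact (hm g hg).symm
  · exact hc.imp (fun {a b} h => ⟨h.2, h.1⟩)

lemma amal_swap (hG : IsAmalgamatedProduct O L) : IsAmalgamatedProduct L O := by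
  refine ⟨by rw [sup_comm]; exact hG.1, ?_⟩
  intro w hw hne
  exact hG.2 w (alt_swap hw) hne

lemma alt_append {l1 l2 : List G} (h : IsAlternatingWord O L (l1 ++ l2)) :
    IsAlternatingWord O L l1 ∧ IsAlternatingWord O L l2 := by
  obtain ⟨hm, hc⟩ := h
  rw [List.Chain', List.isChain_append] at hc
  exact ⟨⟨fun g hg => hm g (List.mem_append.mpr (Or.inl hg)), hc.1⟩,
    ⟨fun g hg => hm g (List.mem_append.mpr (Or.inr hg)), hc.2.1⟩⟩

lemma alt_reverse_inv {w : List G} (h : IsAlternatingWord O L w) :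
    IsAlternatingWord O L ((w.map (·⁻¹)).reverse) := by
  obtain ⟨hm, hc⟩ := h
  constructor
  · intro g hg
    simp only [List.mem_reverse, List.mem_map] at hg
    obtain ⟨a, ha, rfl⟩ := hg
    rcases hm a ha with ⟨h1, h2⟩ | ⟨h1, h2⟩
    · exact Or.inl ⟨inv_mem h1, fun hx => h2 (by simpa using inv_mem hx)⟩
    · exact Or.inr ⟨inv_mem h1, fun hx => h2 (by simpa using inv_mem hx)⟩
  · rw [List.Chain', List.isChain_reverse, List.isChain_map]
    exact hc.imp (fun {a b} h => rel_inv_inv (rel_symm h))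

lemma prod_reverse_inv (w : List G) : ((w.map (·⁻¹)).reverse).prod = w.prod⁻¹ := by
  rw [List.prod_reverse_noncomm]
  simp

lemma rel_of_types {a b : G} (ha : a ∈ O ∧ a ∉ L) (hb : b ∈ L ∧ b ∉ O) : Rel O L a b :=
  ⟨fun h => hb.2 h.2, fun h => ha.2 h.1⟩

lemma rel_of_types' {a b : G} (ha : a ∈ L ∧ a ∉ O) (hb : b ∈ O ∧ b ∉ L) : Rel O L a b :=
  ⟨fun h => ha.2 h.1, fun h => hb.2 h.2⟩

/-- in an alternating word, a letter related to an O∖L letter is in L∖O -/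
lemma opp_of_rel {a b : G} (hrel : Rel O L a b) (hb : b ∈ O ∧ b ∉ L)
    (ha : (a ∈ O ∧ a ∉ L) ∨ (a ∈ L ∧ a ∉ O)) : a ∈ L ∧ a ∉ O := by
  rcases ha with h | h
  · exact absurd ⟨h.1, hb.1⟩ hrel.1
  · exact h


lemma mem_of_getLast?' {l : List G} {a : G} (h : l.getLast? = some a) : a ∈ l := by
  obtain ⟨h1, rfl⟩ := List.mem_getLast?_eq_getLast (by simpa using h)
  exact List.getLast_mem _

/-- junction fact from an alternating word ending in x -/
lemma rel_getLast {ws : List G} {x : G} (h : List.Chain' (Rel O L) (ws ++ [x])) :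
    ∀ p ∈ ws.getLast?, Rel O L p x := by
  rw [List.Chain', List.isChain_append] at h
  intro p hp
  exact h.2.2 p hp x (by simp)

/-- bad-junction auxiliary for the uniqueness of lengths; both last letters in O ∖ L. -/
lemma U_bad (hG : IsAmalgamatedProduct O L) {N : ℕ}
    (IH : ∀ v v' : List G, v.length + v'.length ≤ N → IsAlternatingWord O L v →
      IsAlternatingWord O L v' → v.prod = v'.prod → v.length = v'.length)
    {ws ws' : List G} {x y : G}
    (hw : IsAlternatingWord O L (ws ++ [x])) (hw' : IsAlternatingWord O L (ws' ++ [y]))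
    (hN : (ws ++ [x]).length + (ws' ++ [y]).length ≤ N + 1)
    (hp : (ws ++ [x]).prod = (ws' ++ [y]).prod)
    (hx : x ∈ O ∧ x ∉ L) (hy : y ∈ O ∧ y ∉ L) :
    (ws ++ [x]).length = (ws' ++ [y]).length := by
  have hps : ws'.prod = ws.prod * (x * y⁻¹) := by
    have h1 : ws.prod * x = ws'.prod * y := by simpa [List.prod_append] using hp
    rw [← mul_assoc, h1]; group
  set z := x * y⁻¹ with hzdef
  have hzO : z ∈ O := mul_mem hx.1 (inv_mem hy.1)
  by_cases hzL : z ∈ L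
  · rcases List.eq_nil_or_concat ws with rfl | ⟨ws₀, p, hws⟩
    · have hz' : ws'.prod = z := by simpa using hps
      have : ws' = [] :=
        alt_eq_nil_of_prod_mem hG (alt_append hw').1 (hz' ▸ hzO) (hz' ▸ hzL)
      simp [this]
    · rw [List.concat_eq_append] at hws
      subst hws
      have halt1 : IsAlternatingWord O L (ws₀ ++ [p * z]) :=
        alt_modify_last (alt_append hw).1 (mem_mul_iff_right hzO hzL).1
          (mem_mul_iff_right hzO hzL).2
      have hprod1 : (ws₀ ++ [p * z]).prod = ws'.prod := by
        rw [hps]; simp [List.prod_append, mul_assoc]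
      have hlen := IH _ _ (by simp at hN ⊢; omega) halt1 (alt_append hw').1 hprod1
      simp at hlen ⊢; omega
  · exfalso
    set W := (ws ++ [z]) ++ (ws'.map (·⁻¹)).reverse with hW
    have hprodW : W.prod = 1 := by
      rw [hW]
      rw [List.prod_append, List.prod_append, prod_reverse_inv, hps]
      simp [mul_assoc]
    have hzT : z ∈ O ∧ z ∉ L := ⟨hzO, hzL⟩
    have haltW : IsAlternatingWord O L W := by
      have hrev := alt_reverse_inv (alt_append hw').1
      constructor
      · intro g hg
        rw [hW] at hg
        rcases List.mem_append.mp hg with hg | hg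
        · rcases List.mem_append.mp hg with hg | hg
          · exact hw.1 g (List.mem_append.mpr (Or.inl hg))
          · simp only [List.mem_singleton] at hg; subst hg; exact Or.inl hzT
        · exact hrev.1 g hg
      · rw [hW, List.Chain', List.isChain_append, List.isChain_append]
        refine ⟨⟨(alt_append hw).1.2, by simp, ?_⟩, hrev.2, ?_⟩
        · intro a ha b hb
          simp only [List.head?_cons, Option.mem_def, Option.some.injEq] at hb
          subst hb
          have hrelax : Rel O L a x := rel_getLast hw.2 a ha
          have haT := opp_of_rel hrelax hx (hw.1 a (List.mem_append.mpr (Or.inl (mem_of_getLast?' ha))))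
          exact rel_of_types' haT hzT
        · intro a ha b hb
          rw [List.getLast?_concat] at ha
          simp only [Option.mem_def, Option.some.injEq] at ha
          subst ha
          rw [List.head?_reverse, List.getLast?_map] at hb
          simp only [Option.mem_def, Option.map_eq_some_iff] at hb
          obtain ⟨q, hq, rfl⟩ := hb
          have hrelqy : Rel O L q y := rel_getLast hw'.2 q hq
          have hqT := opp_of_rel hrelqy hy (hw'.1 q (List.mem_append.mpr (Or.inl (mem_of_getLast?' hq))))
          refine rel_of_types hzT ⟨inv_mem hqT.1, fun hc => hqT.2 (by simpa using inv_mem hc)⟩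
    exact hG.2 W haltW (by simp [hW]) hprodW

/-- uniqueness of the length of alternating words representing a given element -/
lemma alt_length_unique (hG : IsAmalgamatedProduct O L) {w w' : List G}
    (hw : IsAlternatingWord O L w) (hw' : IsAlternatingWord O L w')
    (hp : w.prod = w'.prod) : w.length = w'.length := by
  suffices h : ∀ N : ℕ, ∀ O L : Subgroup G, IsAmalgamatedProduct O L →
      ∀ w w' : List G, w.length + w'.length ≤ N → IsAlternatingWord O L w →
      IsAlternatingWord O L w' → w.prod = w'.prod → w.length = w'.length by
    exact h (w.length + w'.length) O L hG w w' le_rfl hw hw' hp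
  clear hG hw hw' hp w w'
  intro N
  induction N with
  | zero =>
    intro O L hG w w' hN hw hw' hp
    simp only [Nat.le_zero, Nat.add_eq_zero] at hN
    simp [List.length_eq_zero_iff.mp hN.1, List.length_eq_zero_iff.mp hN.2]
  | succ N ih =>
    intro O L hG w w' hN hw hw' hp
    rcases List.eq_nil_or_concat w with rfl | ⟨ws, x, hws⟩
    · have : w' = [] := by
        by_contra hne
        exact hG.2 w' hw' hne (by rw [← hp]; simp)
      simp [this]
    rcases List.eq_nil_or_concat w' with rfl | ⟨ws', y, hws'⟩
    · subst hws
      exfalso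
      refine hG.2 _ hw (by simp) ?_
      rw [hp]; simp
    rw [List.concat_eq_append] at hws hws'
    subst hws; subst hws'
    by_cases hrel : Rel O L x y⁻¹
    · exfalso
      set W := (ws ++ [x]) ++ ((ws' ++ [y]).map (·⁻¹)).reverse with hW
      have hprodW : W.prod = 1 := by
        rw [hW, List.prod_append, prod_reverse_inv, hp]
        simp [mul_assoc]
      have haltW : IsAlternatingWord O L W := by
        have hrev := alt_reverse_inv hw'
        constructor
        · intro g hg
          rw [hW] at hg
          rcases List.mem_append.mp hg with hg | hg
          · exact hw.1 g hg
          · exact hrev.1 g hg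
        · rw [hW, List.Chain', List.isChain_append]
          refine ⟨hw.2, hrev.2, ?_⟩
          intro a ha b hb
          rw [List.getLast?_concat] at ha
          simp only [Option.mem_def, Option.some.injEq] at ha
          subst ha
          have : ((ws' ++ [y]).map (·⁻¹)).reverse = y⁻¹ :: (ws'.map (·⁻¹)).reverse := by simp
          rw [this] at hb
          simp only [List.head?_cons, Option.mem_def, Option.some.injEq] at hb
          subst hb
          exact hrel
      exact hG.2 W haltW (by simp [hW]) hprodW
    · have hxT := hw.1 x (by simp)
      have hyT := hw'.1 y (by simp)
      rw [Rel, not_and_or, not_not, not_not] at hrel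
      have hinv : (x ∈ O ∧ y ∈ O) ∨ (x ∈ L ∧ y ∈ L) := by
        rcases hrel with h | h
        · exact Or.inl ⟨h.1, by simpa using inv_mem h.2⟩
        · exact Or.inr ⟨h.1, by simpa using inv_mem h.2⟩
      rcases hinv with h | h
      · have hx : x ∈ O ∧ x ∉ L := by
          rcases hxT with h' | h'
          · exact h'
          · exact absurd h.1 h'.2
        have hy : y ∈ O ∧ y ∉ L := by
          rcases hyT with h' | h'
          · exact h'
          · exact absurd h.2 h'.2
        exact U_bad hG (ih O L hG) hw hw' (by simpa using hN) hp hx hy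
      · have hx : x ∈ L ∧ x ∉ O := by
          rcases hxT with h' | h'
          · exact absurd h.1 h'.2
          · exact h'
        have hy : y ∈ L ∧ y ∉ O := by
          rcases hyT with h' | h'
          · exact absurd h.2 h'.2
          · exact h'
        exact U_bad (amal_swap hG) (ih L O (amal_swap hG)) (alt_swap hw) (alt_swap hw')
          (by simpa using hN) hp hx hy


lemma alt_tail {q : G} {v : List G} (h : IsAlternatingWord O L (q :: v)) :
    IsAlternatingWord O L v :=
  ⟨fun g hg => h.1 g (List.mem_cons_of_mem _ hg), h.2.tail⟩

lemma alt_cons {a q : G} {v : List G} (h : IsAlternatingWord O L (q :: v))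
    (ha : (a ∈ O ∧ a ∉ L) ∨ (a ∈ L ∧ a ∉ O)) (hrel : Rel O L a q) :
    IsAlternatingWord O L (a :: q :: v) := by
  refine ⟨?_, ?_⟩
  · intro g hg
    rcases List.mem_cons.mp hg with rfl | hg
    · exact ha
    · exact h.1 g hg
  · exact List.isChain_cons_cons.mpr ⟨hrel, h.2⟩

/-- reduction step : prepend a letter from O ∖ L to a nonempty alternating word -/
lemma reduce_step {a : G} (haO : a ∈ O) (haL : a ∉ L) {v : List G}
    (hv : IsAlternatingWord O L v) (hne : v ≠ []) :
    (a * v.prod ∈ O ∧ a * v.prod ∈ L) ∨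
      ∃ v' : List G, IsAlternatingWord O L v' ∧ v'.prod = a * v.prod ∧
        v'.length ≤ v.length + 1 ∧ v' ≠ [] := by
  obtain ⟨q, v₁, rfl⟩ := List.exists_cons_of_ne_nil hne
  rcases hv.1 q (by simp) with hq | hq
  · -- q ∈ O ∖ L : merge
    by_cases hbL : a * q ∈ L
    · have hbO : a * q ∈ O := mul_mem haO hq.1
      cases v₁ with
      | nil =>
        left
        constructor
        · simpa using hbO
        · simpa using hbL
      | cons q₂ v₂ =>
        right
        refine ⟨(a * q * q₂) :: v₂, ?_, ?_, by simp, by simp⟩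
        · refine alt_modify_head (alt_tail hv) ?_ ?_
          · exact (mem_mul_iff_left hbO hbL).1
          · exact (mem_mul_iff_left hbO hbL).2
        · simp [mul_assoc]
    · right
      refine ⟨(a * q) :: v₁, ?_, by simp [mul_assoc], by simp, by simp⟩
      refine alt_modify_head hv ?_ ?_
      · exact iff_of_true (mul_mem haO hq.1) hq.1
      · exact iff_of_false hbL hq.2
  · -- q ∈ L ∖ O : just prepend
    right
    exact ⟨a :: q :: v₁, alt_cons hv (Or.inl ⟨haO, haL⟩) (rel_of_types ⟨haO, haL⟩ hq),
      by simp [mul_assoc], by simp, by simp⟩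

/-- any word over O ∪ L either has product in O ∩ L or reduces to a nonempty
alternating word of no greater length -/
lemma reduce : ∀ w : List G, (∀ x ∈ w, x ∈ O ∨ x ∈ L) →
    (w.prod ∈ O ∧ w.prod ∈ L) ∨
      ∃ v : List G, IsAlternatingWord O L v ∧ v.prod = w.prod ∧
        v.length ≤ w.length ∧ v ≠ [] := by
  intro w
  induction w with
  | nil => intro _; exact Or.inl (by simp)
  | cons a rest ihr =>
    intro hlet
    have ha := hlet a (by simp)
    rcases ihr (fun x hx => hlet x (List.mem_cons_of_mem _ hx)) with ⟨hzO, hzL⟩ | ⟨v, hv, hpv, hlv, hne⟩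
    · -- rest.prod ∈ O ∩ L
      set z := rest.prod with hz
      by_cases haO : a ∈ O <;> by_cases haL : a ∈ L
      · left
        exact ⟨by simpa using mul_mem haO hzO, by simpa using mul_mem haL hzL⟩
      · right
        refine ⟨[a * z], ⟨?_, by simp [List.Chain']⟩, by simp [hz], by simp, by simp⟩
        intro g hg
        simp only [List.mem_singleton] at hg; subst hg
        exact Or.inl ⟨mul_mem haO hzO, fun hc => haL ((mem_mul_iff_right hzO hzL).2.mp hc)⟩
      · right
        refine ⟨[a * z], ⟨?_, by simp [List.Chain']⟩, by simp [hz], by simp, by simp⟩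
        intro g hg
        simp only [List.mem_singleton] at hg; subst hg
        exact Or.inr ⟨mul_mem haL hzL, fun hc => haO ((mem_mul_iff_right hzO hzL).1.mp hc)⟩
      · exact absurd ha (by simp [haO, haL])
    · by_cases haO : a ∈ O <;> by_cases haL : a ∈ L
      · -- a ∈ O ∩ L : absorb into head of v
        right
        obtain ⟨q, v₁, rfl⟩ := List.exists_cons_of_ne_nil hne
        refine ⟨(a * q) :: v₁, ?_, ?_, ?_, by simp⟩
        · exact alt_modify_head hv (mem_mul_iff_left haO haL).1 (mem_mul_iff_left haO haL).2
        · simp only [List.prod_cons] at hpv ⊢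
          rw [mul_assoc, hpv]
        · simp at hlv ⊢; omega
      · rcases reduce_step haO haL hv hne with ⟨h1, h2⟩ | ⟨v', h1, h2, h3, h4⟩
        · left; rw [hpv] at h1 h2; exact ⟨by simpa using h1, by simpa using h2⟩
        · right
          exact ⟨v', h1, by rw [h2, hpv]; simp, by simp at hlv ⊢; omega, h4⟩
      · rcases reduce_step (O := L) (L := O) haL haO (alt_swap hv) hne with ⟨h1, h2⟩ | ⟨v', h1, h2, h3, h4⟩
        · left; rw [hpv] at h1 h2; exact ⟨by simpa using h2, by simpa using h1⟩
        · right
          exact ⟨v', alt_swap h1, by rw [h2, hpv]; simp, by simp at hlv ⊢; omega, h4⟩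
      · exact absurd ha (by simp [haO, haL])

/-- the length of an alternating word computes `amalLength` of its product -/
lemma alt_length (hG : IsAmalgamatedProduct O L) {w : List G}
    (hw : IsAlternatingWord O L w) : amalLength O L w.prod = w.length := by
  refine le_antisymm (amalLength_le (alt_letters hw) rfl) ?_
  obtain ⟨w₀, hlen, hlet, hprod⟩ := amalLength_spec hG w.prod
  rcases reduce w₀ hlet with ⟨hO, hL⟩ | ⟨v, hv, hpv, hlv, _⟩
  · have : w = [] := alt_eq_nil_of_prod_mem hG hw (hprod ▸ hO) (hprod ▸ hL)
    simp [this]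
  · have h1 : v.length = w.length := alt_length_unique hG hv hw (by rw [hpv, hprod])
    omega


lemma amalLength_swap (g : G) : amalLength L O g = amalLength O L g := by
  unfold amalLength
  congr 1
  ext n
  simp only [Set.mem_setOf_eq]
  constructor <;> rintro ⟨w, h1, h2, h3⟩ <;> exact ⟨w, h1, fun x hx => (h2 x hx).symm, h3⟩

variable (O L) in
/-- cyclically reduced alternating word -/
def CRW (w : List G) : Prop :=
  IsAlternatingWord O L w ∧ 2 ≤ w.length ∧
    ∀ a ∈ w.getLast?, ∀ b ∈ w.head?, Rel O L a b

/-- every element is conjugate to an element of a factor or to the product of a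
cyclically reduced alternating word -/
lemma exists_conj (hG : IsAmalgamatedProduct O L) (g : G) :
    ∃ c : G, ((c * g * c⁻¹ ∈ O) ∨ (c * g * c⁻¹ ∈ L)) ∨
      ∃ w : List G, CRW O L w ∧ w.prod = c * g * c⁻¹ := by
  suffices h : ∀ n : ℕ, ∀ g : G, amalLength O L g = n →
      ∃ c : G, ((c * g * c⁻¹ ∈ O) ∨ (c * g * c⁻¹ ∈ L)) ∨
        ∃ w : List G, CRW O L w ∧ w.prod = c * g * c⁻¹ by
    exact h _ g rfl
  intro n
  induction n using Nat.strong_induction_on with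
  | _ n ih =>
    intro g hn
    obtain ⟨w₀, hlen, hlet, hprod⟩ := amalLength_spec hG g
    rcases reduce w₀ hlet with ⟨hO, hL⟩ | ⟨v, hv, hpv, hlv, hne⟩
    · exact ⟨1, Or.inl (Or.inl (by simpa using hprod ▸ hO))⟩
    · have hgv : v.prod = g := by rw [hpv, hprod]
      obtain ⟨f, v₁, rfl⟩ := List.exists_cons_of_ne_nil hne
      cases v₁ with
      | nil =>
        refine ⟨1, Or.inl ?_⟩
        have hfg : f = g := by simpa using hgv
        rcases hv.1 f (by simp) with h | h
        · refine Or.inl ?_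
          simp only [one_mul, inv_one, mul_one]
          exact hfg ▸ h.1
        · refine Or.inr ?_
          simp only [one_mul, inv_one, mul_one]
          exact hfg ▸ h.1
      | cons q₂ v₂ =>
        have hlenv : amalLength O L g = (f :: q₂ :: v₂).length := by
          rw [← hgv]; exact alt_length hG hv
        obtain ⟨mid, l, hmid⟩ : ∃ mid lst, q₂ :: v₂ = mid ++ [lst] := by
          rcases List.eq_nil_or_concat (q₂ :: v₂) with h | ⟨m, b, h⟩
          · simp at h
          · exact ⟨m, b, by rw [h, List.concat_eq_append]⟩
        by_cases hrel : Rel O L l f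
        · refine ⟨1, Or.inr ⟨f :: q₂ :: v₂, ⟨hv, by simp, ?_⟩, by simpa using hgv⟩⟩
          intro a ha b hb
          rw [hmid] at ha
          rw [show (f :: (mid ++ [l])).getLast? = some l from by
            rw [← List.cons_append]; exact List.getLast?_concat] at ha
          simp only [Option.mem_def, Option.some.injEq, List.head?_cons] at ha hb
          subst ha; subst hb
          exact hrel
        · -- cyclically reduce : conjugate by f⁻¹
          have hlf : l * f ∈ O ∨ l * f ∈ L := by
            rw [Rel, not_and_or, not_not, not_not] at hrel
            rcases hrel with h | h
            · exact Or.inl (mul_mem h.1 h.2)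
            · exact Or.inr (mul_mem h.1 h.2)
          set g' := f⁻¹ * g * f with hg'
          have hfull := hgv
          rw [hmid] at hfull
          have hg'w : (mid ++ [l * f]).prod = g' := by
            simp only [List.prod_cons, List.prod_append, List.prod_singleton, List.prod_nil, mul_one] at hfull ⊢
            rw [hg', ← hfull]
            group
          have hg'let : ∀ x ∈ mid ++ [l * f], x ∈ O ∨ x ∈ L := by
            intro x hx
            rcases List.mem_append.mp hx with hx | hx
            · refine alt_letters hv x ?_
              rw [hmid]
              exact List.mem_cons_of_mem _ (List.mem_append.mpr (Or.inl hx))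
            · simp only [List.mem_singleton] at hx; subst hx; exact hlf
          have hlt : amalLength O L g' < n := by
            have h1 : amalLength O L g' ≤ mid.length + 1 := by
              simpa using amalLength_le hg'let hg'w
            have h2 : (f :: q₂ :: v₂).length = mid.length + 2 := by
              rw [hmid]; simp
            rw [hlenv, h2] at hn
            omega
          obtain ⟨c', hc'⟩ := ih _ hlt g' rfl
          refine ⟨c' * f⁻¹, ?_⟩
          have : c' * f⁻¹ * g * (c' * f⁻¹)⁻¹ = c' * g' * c'⁻¹ := by
            rw [hg']; group
          rw [this]
          exact hc'

/-- powers of cyclically reduced words -/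
lemma CRW_pow (hG : IsAmalgamatedProduct O L) {w : List G} (hw : CRW O L w) :
    ∀ n : ℕ, 1 ≤ n → ∃ W : List G, IsAlternatingWord O L W ∧ W.prod = w.prod ^ n ∧
      W.length = n * w.length ∧ W.head? = w.head? ∧ W.getLast? = w.getLast? := by
  intro n hn
  induction n with
  | zero => omega
  | succ n ihn =>
    rcases Nat.eq_or_lt_of_le hn with h | h
    · obtain rfl : n = 0 := by omega
      exact ⟨w, hw.1, by simp, by simp, rfl, rfl⟩
    · obtain ⟨W, h1, h2, h3, h4, h5⟩ := ihn (by omega)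
      have hWne : W ≠ [] := by
        intro hc
        rw [hc] at h3
        simp only [List.length_nil] at h3
        have h6 := hw.2.1
        have : 0 < n * w.length := Nat.mul_pos (by omega) (by omega)
        omega
      have hwne : w ≠ [] := by
        intro hc; rw [hc] at hw; have := hw.2.1; simp at this
      refine ⟨w ++ W, ?_, ?_, ?_, ?_, ?_⟩
      · constructor
        · intro x hx
          rcases List.mem_append.mp hx with hx | hx
          · exact hw.1.1 x hx
          · exact h1.1 x hx
        · rw [List.Chain', List.isChain_append]
          refine ⟨hw.1.2, h1.2, ?_⟩
          intro a ha b hb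
          rw [h4] at hb
          exact hw.2.2 a ha b hb
      · rw [List.prod_append, h2, pow_succ']
      · simp [h3]; ring
      · cases w with
        | nil => exact absurd rfl hwne
        | cons a t => simp
      · rw [List.getLast?_append_of_ne_nil _ hWne, h5]


lemma rel_swap {a b : G} : Rel O L a b ↔ Rel L O a b := and_comm

lemma getLast?_cons_of_ne {a : G} {l : List G} (h : l ≠ []) :
    (a :: l).getLast? = l.getLast? := by
  cases l with
  | nil => exact absurd rfl h
  | cons b t => rfl

variable (O L) in
/-- the branch hypothesis for the key lemma -/
def KeyHyp (u w : List G) : Prop :=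
  (2 ≤ w.length ∧ ∀ a ∈ w.getLast?, ∀ b ∈ w.head?, Rel O L a b) ∨
    (w ≠ [] ∧ (∀ a ∈ w.head?, ∀ b ∈ w.getLast?, (a ∈ O ∧ b ∈ O) ∨ (a ∈ L ∧ b ∈ L)) ∧
      ∀ s ∈ u.getLast?, ∀ f ∈ w.head?, Rel O L s f)

lemma keyHyp_swap {u w : List G} (h : KeyHyp O L u w) : KeyHyp L O u w := by
  rcases h with ⟨h1, h2⟩ | ⟨h1, h2, h3⟩
  · exact Or.inl ⟨h1, fun a ha b hb => rel_swap.mp (h2 a ha b hb)⟩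
  · exact Or.inr ⟨h1, fun a ha b hb => (h2 a ha b hb).symm,
      fun s hs f hf => rel_swap.mp (h3 s hs f hf)⟩

/-- key lemma, induction step for a conjugating letter `s ∈ O ∖ L` -/
lemma key_step (hG : IsAmalgamatedProduct O L) {u₀ : List G} {s : G}
    (hu : IsAlternatingWord O L (u₀ ++ [s])) (hsO : s ∈ O) (hsL : s ∉ L)
    (ih : ∀ w : List G, IsAlternatingWord O L w → KeyHyp O L u₀ w →
      w.length ≤ amalLength O L (u₀.prod * w.prod * u₀.prod⁻¹))
    {w : List G} (hw : IsAlternatingWord O L w) (hk : KeyHyp O L (u₀ ++ [s]) w) :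
    w.length ≤ amalLength O L ((u₀ ++ [s]).prod * w.prod * ((u₀ ++ [s]).prod)⁻¹) := by
  have hsT : s ∈ O ∧ s ∉ L := ⟨hsO, hsL⟩
  have hsiT : s⁻¹ ∈ O ∧ s⁻¹ ∉ L :=
    ⟨inv_mem hsO, fun hc => hsL (by simpa using inv_mem hc)⟩
  have hjunc : ∀ t ∈ u₀.getLast?, Rel O L t s := rel_getLast hu.2
  have hargeq : ∀ P : G, (u₀ ++ [s]).prod * P * ((u₀ ++ [s]).prod)⁻¹ =
      u₀.prod * (s * P * s⁻¹) * u₀.prod⁻¹ := by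
    intro P
    simp only [List.prod_append, List.prod_singleton]
    group
  rcases hk with ⟨hlen2, hCR⟩ | ⟨hne, hSame, hJ⟩
  · -- cyclically reduced case
    obtain ⟨f, wt, rfl⟩ := List.exists_cons_of_ne_nil (by intro hc; rw [hc] at hlen2; simp at hlen2 : (w ≠ []))
    have hwtne : wt ≠ [] := by
      intro hc; rw [hc] at hlen2; simp at hlen2
    obtain ⟨mid, l, hmid⟩ : ∃ m b, wt = m ++ [b] := by
      rcases List.eq_nil_or_concat wt with h | ⟨m, b, h⟩
      · exact absurd h hwtne
      · exact ⟨m, b, by rw [h, List.concat_eq_append]⟩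
    have hwdec : f :: wt = (f :: mid) ++ [l] := by rw [hmid]; rfl
    have hlast : (f :: wt).getLast? = some l := by
      rw [hwdec]; exact List.getLast?_concat
    have hrel_lf : Rel O L l f := hCR l (by rw [hlast]; rfl) f rfl
    have hfT := hw.1 f (by simp)
    have hlT := hw.1 l (by rw [hwdec]; simp)
    by_cases hfO : f ∈ O
    · -- head case : f shares the factor of s
      have hfT' : f ∈ O ∧ f ∉ L := by
        rcases hfT with h | h
        · exact h
        · exact absurd hfO h.2
      have hlT' : l ∈ L ∧ l ∉ O := by
        rcases hlT with h | h
        · exact absurd ⟨h.1, hfO⟩ hrel_lf.1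
        · exact h
      obtain ⟨q, w₂, rfl⟩ := List.exists_cons_of_ne_nil hwtne
      have hqT : q ∈ L ∧ q ∉ O :=
        opp_of_rel (rel_symm (List.isChain_cons_cons.mp hw.2).1) hfT' (hw.1 q (by simp))
      set f' := s * f with hf'
      have hf'O : f' ∈ O := mul_mem hsO hfO
      by_cases hf'L : f' ∈ L
      · -- s * f lies in O ∩ L : absorb, cyclically reduced of the same length
        set w' := ((f' * q) :: w₂) ++ [s⁻¹] with hw'
        have hfqT : (f' * q ∈ O ↔ q ∈ O) ∧ (f' * q ∈ L ↔ q ∈ L) :=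
          mem_mul_iff_left hf'O hf'L
        have haltq : IsAlternatingWord O L ((f' * q) :: w₂) :=
          alt_modify_head (alt_tail hw) hfqT.1 hfqT.2
        have hlastq : ∀ a ∈ ((f' * q) :: w₂).getLast?, a ∈ L ∧ a ∉ O := by
          intro a ha
          cases w₂ with
          | nil =>
            simp only [List.getLast?_singleton, Option.mem_def, Option.some.injEq] at ha
            subst ha
            have hql : q = l := by
              have h1 : [q] = mid ++ [l] := hmid
              have hmidnil : mid = [] := by
                have h2 := congrArg List.length h1
                simp at h2
                exact h2
              subst hmidnil
              simpa using h1
            subst hql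
            exact ⟨hfqT.2.mpr hlT'.1, fun hc => hlT'.2 (hfqT.1.mp hc)⟩
          | cons c t =>
            rw [getLast?_cons_of_ne (by simp)] at ha
            have ha' : (q :: c :: t).getLast? = some a := by
              rw [getLast?_cons_of_ne (by simp)]; exact ha
            have hal : a = l := by
              have h1 : (f :: q :: c :: t).getLast? = some a := by
                rw [getLast?_cons_of_ne (by simp)]; exact ha'
              rw [hlast] at h1
              exact (Option.some_inj.mp h1).symm
            subst hal
            exact hlT'
        have haltw' : IsAlternatingWord O L w' := by
          constructor
          · intro g hg
            rw [hw'] at hg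
            rcases List.mem_append.mp hg with hg | hg
            · exact haltq.1 g hg
            · simp only [List.mem_singleton] at hg; subst hg
              exact Or.inl hsiT
          · rw [hw', List.Chain', List.isChain_append]
            refine ⟨haltq.2, by simp, ?_⟩
            intro a ha b hb
            simp only [List.head?_cons, Option.mem_def, Option.some.injEq] at hb
            subst hb
            exact rel_of_types' (hlastq a ha) hsiT
        have hkey' : KeyHyp O L u₀ w' := by
          refine Or.inl ⟨by rw [hw']; simp, ?_⟩
          intro a ha b hb
          rw [hw', List.getLast?_concat] at ha
          simp only [Option.mem_def, Option.some.injEq] at ha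
          subst ha
          rw [hw'] at hb
          simp only [List.cons_append, List.head?_cons, Option.mem_def, Option.some.injEq] at hb
          subst hb
          exact rel_of_types hsiT ⟨hfqT.2.mpr hqT.1, fun hc => hqT.2 (hfqT.1.mp hc)⟩
        have hprod' : w'.prod = s * (f :: q :: w₂).prod * s⁻¹ := by
          rw [hw']
          simp only [List.prod_append, List.prod_cons, List.prod_singleton, List.prod_nil, mul_one]
          rw [hf']
          group
        have hlen' : w'.length = (f :: q :: w₂).length := by
          rw [hw']; simp
        have := ih w' haltw' hkey'
        rw [hprod', hlen'] at this
        rw [hargeq]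
        exact this
      · -- s * f not in L : new pinched word of length k+1
        set w' := (f' :: q :: w₂) ++ [s⁻¹] with hw'
        have hf'T : f' ∈ O ∧ f' ∉ L := ⟨hf'O, hf'L⟩
        have haltf : IsAlternatingWord O L (f' :: q :: w₂) :=
          alt_modify_head hw (iff_of_true hf'O hfO) (iff_of_false hf'L hfT'.2)
        have haltw' : IsAlternatingWord O L w' := by
          constructor
          · intro g hg
            rw [hw'] at hg
            rcases List.mem_append.mp hg with hg | hg
            · exact haltf.1 g hg
            · simp only [List.mem_singleton] at hg; subst hg
              exact Or.inl hsiT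
          · rw [hw', List.Chain', List.isChain_append]
            refine ⟨haltf.2, by simp, ?_⟩
            intro a ha b hb
            simp only [List.head?_cons, Option.mem_def, Option.some.injEq] at hb
            subst hb
            have hal : a = l := by
              have h1 : (f' :: q :: w₂).getLast? = some l := by
                rw [getLast?_cons_of_ne (by simp : (q :: w₂ : List G) ≠ []), ← hlast]
                exact (getLast?_cons_of_ne (by simp : (q :: w₂ : List G) ≠ [])).symm
              rw [h1] at ha
              have h2 := Option.mem_def.mp ha
              exact (Option.some_inj.mp h2).symm
            subst hal
            exact rel_of_types' hlT' hsiT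
        have hkey' : KeyHyp O L u₀ w' := by
          refine Or.inr ⟨by rw [hw']; simp, ?_, ?_⟩
          · intro a ha b hb
            rw [hw'] at ha hb
            simp only [List.cons_append, List.head?_cons, Option.mem_def,
              Option.some.injEq] at ha
            subst ha
            rw [List.getLast?_concat] at hb
            simp only [Option.mem_def, Option.some.injEq] at hb
            subst hb
            exact Or.inl ⟨hf'O, inv_mem hsO⟩
          · intro t ht b hb
            rw [hw'] at hb
            simp only [List.cons_append, List.head?_cons, Option.mem_def,
              Option.some.injEq] at hb
            subst hb
            have h1 : Rel O L t s := hjunc t ht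
            have htT : t ∈ L ∧ t ∉ O :=
              opp_of_rel h1 hsT (hu.1 t (List.mem_append.mpr (Or.inl (mem_of_getLast?' ht))))
            exact rel_of_types' htT hf'T
        have hprod' : w'.prod = s * (f :: q :: w₂).prod * s⁻¹ := by
          rw [hw']
          simp only [List.prod_append, List.prod_cons, List.prod_singleton, List.prod_nil, mul_one]
          rw [hf']
          group
        have hlen' : w'.length = (f :: q :: w₂).length + 1 := by
          rw [hw']; simp
        have := ih w' haltw' hkey'
        rw [hprod', hlen'] at this
        rw [hargeq]
        omega
    · -- tail case : l shares the factor of s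
      have hfT' : f ∈ L ∧ f ∉ O := by
        rcases hfT with h | h
        · exact absurd h.1 hfO
        · exact h
      have hlT' : l ∈ O ∧ l ∉ L := by
        rcases hlT with h | h
        · exact h
        · exact absurd ⟨h.1, hfT'.1⟩ hrel_lf.2
      set W₁ := f :: mid with hW₁
      have hwdec' : f :: wt = W₁ ++ [l] := hwdec
      have haltW₁ : IsAlternatingWord O L W₁ := by
        rw [hwdec'] at hw
        exact (alt_append hw).1
      have hlastW₁ : ∀ a ∈ W₁.getLast?, a ∈ L ∧ a ∉ O := by
        intro a ha
        have h1 : Rel O L a l := by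
          rw [hwdec'] at hw
          exact rel_getLast hw.2 a ha
        exact opp_of_rel h1 hlT' (haltW₁.1 a (mem_of_getLast?' ha))
      have hheadW₁ : W₁.head? = some f := rfl
      set l' := l * s⁻¹ with hl'
      have hl'O : l' ∈ O := mul_mem hlT'.1 (inv_mem hsO)
      by_cases hl'L : l' ∈ L
      · -- l * s⁻¹ in O ∩ L : absorb into the second-to-last letter
        obtain ⟨W₂, p, hW₂⟩ : ∃ m b, W₁ = m ++ [b] := by
          rcases List.eq_nil_or_concat W₁ with h | ⟨m, b, h⟩
          · rw [hW₁] at h; simp at h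
          · exact ⟨m, b, by rw [h, List.concat_eq_append]⟩
        have hpT : p ∈ L ∧ p ∉ O := by
          refine hlastW₁ p ?_
          rw [hW₂]; exact List.getLast?_concat
        have hplT : (p * l' ∈ O ↔ p ∈ O) ∧ (p * l' ∈ L ↔ p ∈ L) :=
          mem_mul_iff_right hl'O hl'L
        set w' := (s :: W₂) ++ [p * l'] with hw'
        have haltp : IsAlternatingWord O L (W₂ ++ [p * l']) := by
          rw [hW₂] at haltW₁
          exact alt_modify_last haltW₁ hplT.1 hplT.2
        have hheadp : ∀ y ∈ (W₂ ++ [p * l']).head?, y ∈ L ∧ y ∉ O := by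
          intro y hy
          cases W₂ with
          | nil =>
            simp only [List.nil_append, List.head?_cons, Option.mem_def,
              Option.some.injEq] at hy
            subst hy
            exact ⟨hplT.2.mpr hpT.1, fun hc => hpT.2 (hplT.1.mp hc)⟩
          | cons c t =>
            simp only [List.cons_append, List.head?_cons, Option.mem_def,
              Option.some.injEq] at hy
            subst hy
            have hcf : c = f := by
              rw [hW₂] at hheadW₁
              simpa using hheadW₁
            subst hcf
            exact hfT'
        have haltw' : IsAlternatingWord O L w' := by
          constructor
          · intro g hg
            rw [hw'] at hg
            rcases List.mem_cons.mp hg with rfl | hg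
            · exact Or.inl hsT
            · exact haltp.1 g hg
          · rw [hw', List.cons_append, List.Chain', List.isChain_cons]
            refine ⟨?_, haltp.2⟩
            intro y hy
            exact rel_of_types hsT (hheadp y hy)
        have hkey' : KeyHyp O L u₀ w' := by
          refine Or.inl ⟨by rw [hw']; simp, ?_⟩
          intro a ha b hb
          rw [hw', List.cons_append, getLast?_cons_of_ne (by simp),
            List.getLast?_concat] at ha
          simp only [Option.mem_def, Option.some.injEq] at ha
          subst ha
          rw [hw'] at hb
          simp only [List.cons_append, List.head?_cons, Option.mem_def,
            Option.some.injEq] at hb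
          subst hb
          exact rel_of_types' ⟨hplT.2.mpr hpT.1, fun hc => hpT.2 (hplT.1.mp hc)⟩ hsT
        have hprod' : w'.prod = s * (f :: wt).prod * s⁻¹ := by
          rw [hw', hwdec', hW₂]
          simp only [List.prod_append, List.prod_cons, List.prod_singleton, List.prod_nil, mul_one]
          rw [hl']
          group
        have hlen' : w'.length = (f :: wt).length := by
          rw [hw', hwdec', hW₂]; simp
        have := ih w' haltw' hkey'
        rw [hprod', hlen'] at this
        rw [hargeq]
        exact this
      · -- l * s⁻¹ not in L : new pinched word
        have hl'T : l' ∈ O ∧ l' ∉ L := ⟨hl'O, hl'L⟩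
        set w' := (s :: W₁) ++ [l'] with hw'
        have haltsW₁ : IsAlternatingWord O L (s :: W₁) := by
          constructor
          · intro g hg
            rcases List.mem_cons.mp hg with rfl | hg
            · exact Or.inl hsT
            · exact haltW₁.1 g hg
          · rw [List.Chain', List.isChain_cons]
            refine ⟨?_, haltW₁.2⟩
            intro y hy
            rw [hheadW₁] at hy
            simp only [Option.mem_def, Option.some.injEq] at hy
            subst hy
            exact rel_of_types hsT hfT'
        have haltw' : IsAlternatingWord O L w' := by
          constructor
          · intro g hg
            rw [hw'] at hg
            rcases List.mem_append.mp hg with hg | hg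
            · exact haltsW₁.1 g hg
            · simp only [List.mem_singleton] at hg; subst hg
              exact Or.inl hl'T
          · rw [hw', List.Chain', List.isChain_append]
            refine ⟨haltsW₁.2, by simp, ?_⟩
            intro a ha b hb
            simp only [List.head?_cons, Option.mem_def, Option.some.injEq] at hb
            subst hb
            rw [getLast?_cons_of_ne (by rw [hW₁]; simp)] at ha
            exact rel_of_types' (hlastW₁ a ha) hl'T
        have hkey' : KeyHyp O L u₀ w' := by
          refine Or.inr ⟨by rw [hw']; simp, ?_, ?_⟩
          · intro a ha b hb
            rw [hw'] at ha hb
            simp only [List.cons_append, List.head?_cons, Option.mem_def,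
              Option.some.injEq] at ha
            subst ha
            rw [List.getLast?_concat] at hb
            simp only [Option.mem_def, Option.some.injEq] at hb
            subst hb
            exact Or.inl ⟨hsO, hl'O⟩
          · intro t ht b hb
            rw [hw'] at hb
            simp only [List.cons_append, List.head?_cons, Option.mem_def,
              Option.some.injEq] at hb
            subst hb
            exact hjunc t ht
        have hprod' : w'.prod = s * (f :: wt).prod * s⁻¹ := by
          rw [hw', hwdec']
          simp only [List.prod_append, List.prod_cons, List.prod_singleton, List.prod_nil, mul_one]
          rw [hl']
          group
        have hlen' : w'.length = (f :: wt).length + 1 := by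
          rw [hw', hwdec']; simp
        have := ih w' haltw' hkey'
        rw [hprod', hlen'] at this
        rw [hargeq]
        omega
  · -- pinched case
    obtain ⟨f, wt, rfl⟩ := List.exists_cons_of_ne_nil hne
    have hfT : f ∈ L ∧ f ∉ O := by
      have h1 : Rel O L s f := hJ s (by rw [List.getLast?_concat]; rfl) f rfl
      exact opp_of_rel (rel_symm h1) hsT (hw.1 f (by simp))
    set w' := (s :: f :: wt) ++ [s⁻¹] with hw'
    have hlastT : ∀ a ∈ (f :: wt).getLast?, a ∈ L ∧ a ∉ O := by
      intro a ha
      have h1 := hSame f rfl a ha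
      rcases hw.1 a (mem_of_getLast?' ha) with h2 | h2
      · rcases h1 with h | h
        · exact absurd h.1 hfT.2
        · exact absurd h.2 h2.2
      · exact h2
    have haltsf : IsAlternatingWord O L (s :: f :: wt) :=
      alt_cons hw (Or.inl hsT) (rel_of_types hsT hfT)
    have haltw' : IsAlternatingWord O L w' := by
      constructor
      · intro g hg
        rw [hw'] at hg
        rcases List.mem_append.mp hg with hg | hg
        · exact haltsf.1 g hg
        · simp only [List.mem_singleton] at hg; subst hg
          exact Or.inl hsiT
      · rw [hw', List.Chain', List.isChain_append]
        refine ⟨haltsf.2, by simp, ?_⟩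
        intro a ha b hb
        simp only [List.head?_cons, Option.mem_def, Option.some.injEq] at hb
        subst hb
        rw [getLast?_cons_of_ne (by simp)] at ha
        exact rel_of_types' (hlastT a ha) hsiT
    have hkey' : KeyHyp O L u₀ w' := by
      refine Or.inr ⟨by rw [hw']; simp, ?_, ?_⟩
      · intro a ha b hb
        rw [hw'] at ha hb
        simp only [List.cons_append, List.head?_cons, Option.mem_def,
          Option.some.injEq] at ha
        subst ha
        rw [List.getLast?_concat] at hb
        simp only [Option.mem_def, Option.some.injEq] at hb
        subst hb
        exact Or.inl ⟨hsO, inv_mem hsO⟩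
      · intro t ht b hb
        rw [hw'] at hb
        simp only [List.cons_append, List.head?_cons, Option.mem_def,
          Option.some.injEq] at hb
        subst hb
        exact hjunc t ht
    have hprod' : w'.prod = s * (f :: wt).prod * s⁻¹ := by
      rw [hw']
      simp only [List.prod_append, List.prod_cons, List.prod_singleton,
        List.prod_nil, mul_one]
    have hlen' : w'.length = (f :: wt).length + 2 := by
      rw [hw']; simp
    have := ih w' haltw' hkey'
    rw [hprod', hlen'] at this
    rw [hargeq]
    omega


/-- key lemma: a conjugate of a cyclically reduced word's product is no shorter -/
lemma key : ∀ u : List G, ∀ O L : Subgroup G, IsAmalgamatedProduct O L →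
    IsAlternatingWord O L u → ∀ w : List G, IsAlternatingWord O L w → KeyHyp O L u w →
    w.length ≤ amalLength O L (u.prod * w.prod * u.prod⁻¹) := by
  intro u
  induction u using List.reverseRecOn with
  | nil =>
    intro O L hG hu w hw hk
    simp only [List.prod_nil, one_mul, inv_one, mul_one]
    rw [alt_length hG hw]
  | append_singleton u₀ s ihu =>
    intro O L hG hu w hw hk
    have hu₀ := (alt_append hu).1
    rcases hu.1 s (by simp) with hsT | hsT
    · exact key_step hG hu hsT.1 hsT.2 (fun w' hw' hk' => ihu O L hG hu₀ w' hw' hk') hw hk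
    · have h1 := key_step (amal_swap hG) (alt_swap hu) hsT.1 hsT.2
        (fun w' hw' hk' => by
          rw [amalLength_swap]
          exact ihu O L hG hu₀ w' (alt_swap hw') (keyHyp_swap hk'))
        (alt_swap hw) (keyHyp_swap hk)
      rwa [amalLength_swap] at h1

/-- the key lemma for an arbitrary conjugating element -/
lemma key' (hG : IsAmalgamatedProduct O L) {w : List G} (halt : IsAlternatingWord O L w)
    (hlen2 : 2 ≤ w.length) (hCR : ∀ a ∈ w.getLast?, ∀ b ∈ w.head?, Rel O L a b) :
    ∀ t : G, w.length ≤ amalLength O L (t * w.prod * t⁻¹) := by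
  intro t
  obtain ⟨w₀, hlet, hprod⟩ := exists_word hG t
  rcases reduce w₀ hlet with ⟨hO, hL⟩ | ⟨u, hu, hpu, _, _⟩
  · -- t ∈ O ∩ L : conjugation modifies the first and last letters only
    rw [hprod] at hO hL
    obtain ⟨f, wt, rfl⟩ := List.exists_cons_of_ne_nil
      (by intro hc; rw [hc] at hlen2; simp at hlen2 : (w ≠ []))
    obtain ⟨mid, l, hmid⟩ : ∃ m b, wt = m ++ [b] := by
      rcases List.eq_nil_or_concat wt with h | ⟨m, b, h⟩
      · exfalso; rw [h] at hlen2; simp at hlen2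
      · exact ⟨m, b, by rw [h, List.concat_eq_append]⟩
    subst hmid
    set w'' := ((t * f) :: mid) ++ [l * t⁻¹] with hw''
    have halt1 : IsAlternatingWord O L ((t * f) :: (mid ++ [l])) :=
      alt_modify_head halt (mem_mul_iff_left hO hL).1 (mem_mul_iff_left hO hL).2
    have halt2 : IsAlternatingWord O L w'' := by
      rw [hw'']
      have h3 : (t * f) :: (mid ++ [l]) = ((t * f) :: mid) ++ [l] := by simp
      rw [h3] at halt1
      exact alt_modify_last halt1 (mem_mul_iff_right (inv_mem hO) (inv_mem hL)).1
        (mem_mul_iff_right (inv_mem hO) (inv_mem hL)).2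
    have hprod2 : w''.prod = t * (f :: (mid ++ [l])).prod * t⁻¹ := by
      rw [hw'']
      simp only [List.prod_append, List.prod_cons, List.prod_singleton,
        List.prod_nil, mul_one]
      group
    have hlen2' : w''.length = (f :: (mid ++ [l])).length := by rw [hw'']; simp
    rw [← hprod2, alt_length hG halt2, hlen2']
  · have h1 := key u O L hG hu w halt (Or.inl ⟨hlen2, hCR⟩)
    rw [hpu, hprod] at h1
    exact h1

end AmalAux

/-- A cyclically reduced element: its length is even and at least `2`
(equivalently, its reduced expression starts and ends in different factors). -/
def IsCyclicallyReduced {G : Type*} [Group G] (O L : Subgroup G) (g : G) : Prop :=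
  2 ≤ amalLength O L g ∧ Even (amalLength O L g)

/-- If an element of a free amalgamated product has `n`-th roots for every positive
integer `n`, then it is conjugate to an element of `O` or to an element of `L`. -/
theorem conjugate_into_factor_of_roots_of_all_orders
    {G : Type*} [Group G] (O L : Subgroup G)
    (hG : IsAmalgamatedProduct O L) (g : G)
    (hroots : ∀ n : ℕ, 0 < n → ∃ h : G, h ^ n = g) :
    (∃ c : G, c * g * c⁻¹ ∈ O) ∨ (∃ c : G, c * g * c⁻¹ ∈ L) := by
  classical
  by_contra hcon
  push_neg at hcon
  obtain ⟨hnO, hnL⟩ := hcon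
  obtain ⟨c, hc⟩ := AmalAux.exists_conj hG g
  rcases hc with (h | h) | ⟨w, ⟨haltw, hlen2, hCR⟩, hprodw⟩
  · exact hnO c h
  · exact hnL c h
  · set k := w.length with hk
    obtain ⟨h, hh⟩ := hroots (k + 1) (by omega)
    obtain ⟨c₂, hc₂⟩ := AmalAux.exists_conj hG h
    rcases hc₂ with (h2 | h2) | ⟨y, hCRWy, hprody⟩
    · refine hnO c₂ ?_
      have he : c₂ * g * c₂⁻¹ = (c₂ * h * c₂⁻¹) ^ (k + 1) := by rw [conj_pow, hh]
      rw [he]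
      exact pow_mem h2 _
    · refine hnL c₂ ?_
      have he : c₂ * g * c₂⁻¹ = (c₂ * h * c₂⁻¹) ^ (k + 1) := by rw [conj_pow, hh]
      rw [he]
      exact pow_mem h2 _
    · obtain ⟨W, haltW, hprodW, hlenW, hheadW, hlastW⟩ :=
        AmalAux.CRW_pow hG hCRWy (k + 1) (by omega)
      have hCRW : ∀ a ∈ W.getLast?, ∀ b ∈ W.head?, AmalAux.Rel O L a b := by
        intro a ha b hb
        rw [hlastW] at ha
        rw [hheadW] at hb
        exact hCRWy.2.2 a ha b hb
      have hym : 2 ≤ y.length := hCRWy.2.1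
      have hlenW2 : 2 ≤ W.length := by
        rw [hlenW]
        calc 2 ≤ y.length := hym
        _ ≤ (k + 1) * y.length := Nat.le_mul_of_pos_left _ (by omega)
      have hfin := AmalAux.key' hG haltW hlenW2 hCRW (c * c₂⁻¹)
      have harg : (c * c₂⁻¹) * W.prod * (c * c₂⁻¹)⁻¹ = w.prod := by
        rw [hprodW, hprody, conj_pow, hh, hprodw]
        group
      have hAL : amalLength O L w.prod = k := AmalAux.alt_length hG haltw
      rw [harg, hAL, hlenW] at hfin
      have hmul : (k + 1) * 2 ≤ (k + 1) * y.length := Nat.mul_le_mul_left _ hym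
      omega
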